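/- Let Φ_∞ ≥ 0, and suppose for every subfamily J of {1,...,n} such that the balls {B(x_j, 2R)}_{j∈J} are pairwise disjoint, one has Σ_{j∈J} a_j ≤ Φ_∞, where a_1, ..., a_n ≥ 0. Assume each ball B(x_i, R) contains a point of a cubic lattice L of mesh R/2 inside B(0,R0), each lattice point is contained in at most K2 of the balls B(x_i, R), L decomposes as a union of 8³ sublattices of mesh 4R, and balls of radius 2R centered within distance R of distinct points of any mesh-4R sublattice are pairwise disjoint. Then Σ_{i=1}^n a_i ≤ 8³ K2 Φ_∞. -/
import Mathlib


open scoped Classical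
open Metric

/-- **Combinatorial core of Lemma 3.1.** Suppose `a 1, …, a n ≥ 0` and `Φinf ≥ 0` are such that
`Σ_{j∈J} a j ≤ Φinf` whenever the doubled balls `{B(x j, 2R)}_{j∈J}` are pairwise disjoint.
Assume each ball `B(x i, R)` contains a chosen point `pt i` of a lattice `L`, each lattice
point lies in at most `K2` of the balls `B(x i, R)`, `L` decomposes as the union of `8³ = 512`
sublattices `L m`, and balls of radius `2R` centered within distance `R` of distinct points
of any sublattice are pairwise disjoint. Then `Σ_i a i ≤ 8³ K2 Φinf`. -/
theorem anomalous_flux_combinatorial_bound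
    (R Φinf : ℝ) (hR : 0 < R) (hΦ : 0 ≤ Φinf)
    (n K2 : ℕ)
    (x : Fin n → EuclideanSpace ℝ (Fin 3)) (a : Fin n → ℝ) (ha : ∀ i, 0 ≤ a i)
    (hsum : ∀ J : Finset (Fin n),
      (∀ j ∈ J, ∀ j' ∈ J, j ≠ j' →
        Disjoint (ball (x j) (2 * R)) (ball (x j') (2 * R))) →
      ∑ j ∈ J, a j ≤ Φinf)
    (L : Fin (8 ^ 3) → Set (EuclideanSpace ℝ (Fin 3)))
    (pt : Fin n → EuclideanSpace ℝ (Fin 3))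
    (hpt : ∀ i, (∃ m, pt i ∈ L m) ∧ pt i ∈ ball (x i) R)
    (hmult : ∀ q : EuclideanSpace ℝ (Fin 3),
      (Finset.univ.filter (fun i => q ∈ ball (x i) R)).card ≤ K2)
    (hdisj : ∀ m, ∀ p ∈ L m, ∀ q ∈ L m, p ≠ q →
      ∀ y z : EuclideanSpace ℝ (Fin 3), dist y p ≤ R → dist z q ≤ R →
        Disjoint (ball y (2 * R)) (ball z (2 * R))) :
    ∑ i, a i ≤ (8 ^ 3 : ℕ) * K2 * Φinf := by

  classical
  -- color of each index
  set col : Fin n → Fin (8 ^ 3) := fun i => Classical.choose (hpt i).1 with hcoldef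
  have hcol : ∀ i, pt i ∈ L (col i) := fun i => Classical.choose_spec (hpt i).1
  -- the key per-color bound
  have key : ∀ m : Fin (8 ^ 3),
      ∑ i ∈ Finset.univ.filter (fun i => col i = m), a i ≤ (K2 : ℝ) * Φinf := by
    intro m
    set S := Finset.univ.filter (fun i => col i = m) with hS
    set Q := S.image pt with hQ
    -- group by lattice point
    have hfib : ∑ q ∈ Q, ∑ i ∈ S.filter (fun i => pt i = q), a i = ∑ i ∈ S, a i :=
      Finset.sum_fiberwise_of_maps_to (fun i hi => Finset.mem_image_of_mem pt hi) a
    -- representatives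
    have hrep : ∀ q ∈ Q, ∃ b ∈ S.filter (fun i => pt i = q),
        ∀ i ∈ S.filter (fun i => pt i = q), a i ≤ a b := by
      intro q hq
      obtain ⟨i, hi, hip⟩ := Finset.mem_image.mp hq
      exact Finset.exists_max_image _ a ⟨i, Finset.mem_filter.mpr ⟨hi, hip⟩⟩
    set r : {q // q ∈ Q} → Fin n := fun q => Classical.choose (hrep q.1 q.2) with hr
    have hrspec : ∀ q : {q // q ∈ Q}, r q ∈ S.filter (fun i => pt i = q.1) ∧
        ∀ i ∈ S.filter (fun i => pt i = q.1), a i ≤ a (r q) := by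
      intro q
      obtain ⟨h1, h2⟩ := Classical.choose_spec (hrep q.1 q.2)
      exact ⟨h1, h2⟩
    have hrpt : ∀ q : {q // q ∈ Q}, pt (r q) = q.1 := fun q =>
      (Finset.mem_filter.mp (hrspec q).1).2
    have hrS : ∀ q : {q // q ∈ Q}, r q ∈ S := fun q =>
      (Finset.mem_filter.mp (hrspec q).1).1
    -- each group's sum bounded by K2 * a(rep)
    have hgroup : ∀ q : {q // q ∈ Q},
        ∑ i ∈ S.filter (fun i => pt i = q.1), a i ≤ (K2 : ℝ) * a (r q) := by
      intro q
      have hcard : (S.filter (fun i => pt i = q.1)).card ≤ K2 := by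
        refine le_trans (Finset.card_le_card ?_) (hmult q.1)
        intro i hi
        obtain ⟨-, hip⟩ := Finset.mem_filter.mp hi
        refine Finset.mem_filter.mpr ⟨Finset.mem_univ i, ?_⟩
        rw [← hip]
        exact (hpt i).2
      calc ∑ i ∈ S.filter (fun i => pt i = q.1), a i
          ≤ (S.filter (fun i => pt i = q.1)).card • a (r q) :=
            Finset.sum_le_card_nsmul _ _ _ (fun i hi => (hrspec q).2 i hi)
        _ = ((S.filter (fun i => pt i = q.1)).card : ℝ) * a (r q) := by
            simp [nsmul_eq_mul]
        _ ≤ (K2 : ℝ) * a (r q) := by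
            have := ha (r q)
            exact mul_le_mul_of_nonneg_right (by exact_mod_cast hcard) this
    -- sum of representatives bounded by Φinf
    have hinj : Function.Injective r := by
      intro q q' h
      have : q.1 = q'.1 := by rw [← hrpt q, ← hrpt q', h]
      exact Subtype.ext this
    have hJ : ∑ q ∈ Q.attach, a (r q) ≤ Φinf := by
      rw [← Finset.sum_image (fun q _ q' _ h => hinj h)]
      apply hsum
      intro j hj j' hj' hne
      obtain ⟨q, -, rfl⟩ := Finset.mem_image.mp hj
      obtain ⟨q', -, rfl⟩ := Finset.mem_image.mp hj'
      have hqq : q.1 ≠ q'.1 := by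
        intro h; exact hne (congrArg r (Subtype.ext h))
      have hLq : pt (r q) ∈ L m := by
        have hc : col (r q) = m := (Finset.mem_filter.mp (hrS q)).2
        rw [← hc]; exact hcol (r q)
      have hLq' : pt (r q') ∈ L m := by
        have hc : col (r q') = m := (Finset.mem_filter.mp (hrS q')).2
        rw [← hc]; exact hcol (r q')
      have hptne : pt (r q) ≠ pt (r q') := by
        rw [hrpt q, hrpt q']; exact hqq
      refine hdisj m (pt (r q)) hLq (pt (r q')) hLq' hptne (x (r q)) (x (r q')) ?_ ?_
      · rw [dist_comm]; exact le_of_lt (mem_ball.mp (hpt (r q)).2)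
      · rw [dist_comm]; exact le_of_lt (mem_ball.mp (hpt (r q')).2)
    calc ∑ i ∈ S, a i = ∑ q ∈ Q, ∑ i ∈ S.filter (fun i => pt i = q), a i := hfib.symm
      _ = ∑ q ∈ Q.attach, ∑ i ∈ S.filter (fun i => pt i = q.1), a i :=
          (Finset.sum_attach Q _).symm
      _ ≤ ∑ q ∈ Q.attach, (K2 : ℝ) * a (r q) := Finset.sum_le_sum (fun q _ => hgroup q)
      _ = (K2 : ℝ) * ∑ q ∈ Q.attach, a (r q) := by rw [Finset.mul_sum]
      _ ≤ (K2 : ℝ) * Φinf := mul_le_mul_of_nonneg_left hJ (by positivity)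
  have htotal : ∑ i, a i = ∑ m : Fin (8 ^ 3),
      ∑ i ∈ Finset.univ.filter (fun i => col i = m), a i :=
    (Finset.sum_fiberwise Finset.univ col a).symm
  calc ∑ i, a i = _ := htotal
    _ ≤ ∑ _m : Fin (8 ^ 3), (K2 : ℝ) * Φinf := Finset.sum_le_sum (fun m _ => key m)
    _ = (8 ^ 3 : ℕ) * K2 * Φinf := by
        rw [Finset.sum_const, Finset.card_univ, Fintype.card_fin, nsmul_eq_mul]
        push_cast; ring
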